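/- Let X_1, X_2, ... be an i.i.d. sequence of real-valued random variables with common distribution function F, and let F_n denote the empirical distribution function of the first n observations. Fix p ∈ (0,1). Then almost surely, liminf_{n→∞} lq_{F_n}(p) = lq_F(p). -/

import Mathlib

/-!
Write `q = lq F p`. For rational `r < q` we have `F r < p`, so by the strong law `F_n r < p`
eventually, i.e. `r ≤ lq F_n p` eventually. For rational `r > q` we have `p ≤ F r`: if `p < F r`
the strong law gives `p ≤ F_n r` eventually; if `F r = p ∈ (0, 1)`, the centred counts
`∑ i ≤ n, (1{X i ≤ r} - p)` form a martingale whose steps lie between `min p (1 - p)` and `1`.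
It cannot converge, so by the one-sided martingale bound it is unbounded above, and
`p ≤ F_n r` infinitely often. Either way `lq F_n p ≤ r` infinitely often.
-/

open MeasureTheory ProbabilityTheory Filter

/-- Left quantile of a distribution function `F` at level `p`:
`lq F p = inf {x | F x ≥ p}`. -/
noncomputable def lq (F : ℝ → ℝ) (p : ℝ) : ℝ := sInf {x : ℝ | p ≤ F x}

/-- Right quantile of a distribution function `F` at level `p`:
`rq F p = inf {x | F x > p}`. -/
noncomputable def rq (F : ℝ → ℝ) (p : ℝ) : ℝ := sInf {x : ℝ | p < F x}

/-- Empirical distribution function of the first `n` observations `X 0, ..., X (n-1)`: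
`edf X n ω x = (1/n) * #{i < n | X i ω ≤ x}`. -/
noncomputable def edf {Ω : Type*} (X : ℕ → Ω → ℝ) (n : ℕ) (ω : Ω) (x : ℝ) : ℝ :=
  ((Finset.range n).filter (fun i => X i ω ≤ x)).card / n

open Set Topology
open scoped NNReal

section Quantile

variable {F : ℝ → ℝ} {p r : ℝ}

lemma lq_le (hb : BddBelow {x | p ≤ F x}) (h : p ≤ F r) : lq F p ≤ r :=
  csInf_le hb h

lemma lt_of_lt_lq (hb : BddBelow {x | p ≤ F x}) (h : r < lq F p) : F r < p :=
  lt_of_not_ge fun h' => h.not_ge (lq_le hb h')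

lemma le_lq (hF : Monotone F) (hne : {x | p ≤ F x}.Nonempty) (h : F r < p) : r ≤ lq F p :=
  le_csInf hne fun _ hy => le_of_not_gt fun hyr => (hy.trans (hF hyr.le)).not_gt h

lemma le_of_lq_lt (hF : Monotone F) (hne : {x | p ≤ F x}.Nonempty) (h : lq F p < r) :
    p ≤ F r := by
  obtain ⟨y, hy, hyr⟩ := exists_lt_of_csInf_lt hne h
  exact hy.trans (hF hyr.le)

end Quantile

section CDF

variable (ν : Measure ℝ) {p : ℝ}

lemma bddBelow_cdf_ge (hp : 0 < p) : BddBelow {x | p ≤ cdf ν x} := by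
  obtain ⟨a, ha⟩ := eventually_atBot.1 ((tendsto_cdf_atBot ν).eventually_lt_const hp)
  exact ⟨a, fun y hy => le_of_not_gt fun hya => (ha y hya.le).not_ge hy⟩

lemma nonempty_cdf_ge (hp : p < 1) : {x | p ≤ cdf ν x}.Nonempty :=
  ((tendsto_cdf_atTop ν).eventually_const_le hp).exists

end CDF

lemma liminf_eq_of_forall_rat {ι : Type*} {l : Filter ι} {u : ι → ℝ} {q : ℝ}
    (hlow : ∀ r : ℚ, (r : ℝ) < q → ∀ᶠ n in l, (r : ℝ) ≤ u n)
    (hhigh : ∀ r : ℚ, q < r → ∃ᶠ n in l, u n ≤ r) :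
    liminf u l = q := by
  obtain ⟨r₀, hr₀⟩ := exists_rat_lt q
  obtain ⟨r₁, hr₁⟩ := exists_rat_gt q
  have hbdd : IsBoundedUnder (· ≥ ·) l u := isBoundedUnder_of_eventually_ge (hlow r₀ hr₀)
  have hcobdd : IsCoboundedUnder (· ≥ ·) l u := .of_frequently_le (hhigh r₁ hr₁)
  exact le_antisymm
    (le_of_forall_lt_rat_imp_le fun r hr => liminf_le_of_frequently_le (hhigh r hr) hbdd)
    (le_of_forall_rat_lt_imp_le fun r hr => le_liminf_of_le hcobdd (hlow r hr))

lemma frequently_le_of_not_bddAbove_range {α : Type*} [LinearOrder α] {u : ℕ → α}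
    (h : ¬BddAbove (range u)) (c : α) : ∃ᶠ n in atTop, c ≤ u n := by
  contrapose! h
  exact (isBoundedUnder_of_eventually_le (h.mono fun _ hn => hn.le)).bddAbove_range

lemma abs_indicator_one_sub_mem_Icc {α : Type*} (s : Set α) {c : ℝ} (h0 : 0 < c) (h1 : c < 1)
    (t : α) : |s.indicator 1 t - c| ∈ Icc (min c (1 - c)) 1 := by
  by_cases ht : t ∈ s
  · rw [indicator_of_mem ht, Pi.one_apply, abs_of_pos (sub_pos.2 h1)]
    constructor <;> linarith [min_le_right c (1 - c)]
  · rw [indicator_of_notMem ht, zero_sub, abs_neg, abs_of_pos h0]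
    constructor <;> linarith [min_le_left c (1 - c)]

section EmpiricalDistribution

variable {Ω : Type*} (X : ℕ → Ω → ℝ) {n : ℕ} {ω : Ω} {p x : ℝ}

lemma edf_mono (n : ℕ) (ω : Ω) : Monotone (edf X n ω) := fun a b hab => by
  unfold edf
  gcongr

lemma edf_eq_sum_indicator (n : ℕ) (ω : Ω) (x : ℝ) :
    edf X n ω x = (∑ i ∈ Finset.range n, (Iic x).indicator 1 (X i ω)) / n := by
  simp [edf, indicator_apply, Finset.sum_boole]

lemma exists_le_of_edf_pos (h : 0 < edf X n ω x) : ∃ i ∈ Finset.range n, X i ω ≤ x := by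
  by_contra! hc
  simp [edf, Finset.filter_false_of_mem fun i hi => not_le.2 (hc i hi)] at h

lemma edf_eq_one (hn : n ≠ 0) (h : ∀ i ∈ Finset.range n, X i ω ≤ x) : edf X n ω x = 1 := by
  simp [edf, Finset.filter_true_of_mem h, hn]

lemma bddBelow_edf_ge (hp : 0 < p) : BddBelow {x | p ≤ edf X n ω x} := by
  obtain ⟨b, hb⟩ := ((Finset.range n).image fun i => X i ω).bddBelow
  refine ⟨b, fun x hx => ?_⟩
  obtain ⟨i, hi, hix⟩ := exists_le_of_edf_pos X (hp.trans_le hx)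
  exact (hb (Finset.mem_image_of_mem _ hi)).trans hix

lemma nonempty_edf_ge (hn : n ≠ 0) (hp : p ≤ 1) : {x | p ≤ edf X n ω x}.Nonempty := by
  obtain ⟨b, hb⟩ := ((Finset.range n).image fun i => X i ω).bddAbove
  exact ⟨b, by simpa [edf_eq_one X hn fun i hi => hb (Finset.mem_image_of_mem _ hi)] using hp⟩

end EmpiricalDistribution

section Martingale

variable {Ω : Type*} {m0 : MeasurableSpace Ω} {μ : Measure Ω}

theorem ProbabilityTheory.iIndepFun.martingale_sum_range_succ {Y : ℕ → Ω → ℝ}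
    (hY : ∀ i, StronglyMeasurable (Y i)) (hindep : iIndepFun Y μ)
    (hint : ∀ i, Integrable (Y i) μ) (hmean : ∀ i, μ[Y i] = 0) :
    Martingale (fun n => ∑ i ∈ Finset.range (n + 1), Y i) (Filtration.natural Y hY) μ := by
  have := hindep.isProbabilityMeasure
  refine martingale_of_condExp_sub_eq_zero_nat (fun n => ?_)
    (fun n => integrable_finsetSum' _ fun i _ => hint i) fun n => ?_
  · refine Finset.stronglyMeasurable_sum _ fun i hi => ?_
    exact (Filtration.stronglyAdapted_natural hY i).mono
      (Filtration.mono _ (Nat.lt_succ_iff.1 (Finset.mem_range.1 hi)))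
  · rw [Finset.sum_range_succ_sub_sum]
    exact (hindep.condExp_natural_ae_eq_of_lt hY n.lt_succ_self).trans (by simp only [hmean]; rfl)

theorem MeasureTheory.Martingale.ae_not_bddAbove_range [IsFiniteMeasure μ]
    {ℱ : Filtration ℕ m0} {M : ℕ → Ω → ℝ} (hM : Martingale M ℱ μ) {R : ℝ≥0} {δ : ℝ} (hδ : 0 < δ)
    (hbdd : ∀ᵐ ω ∂μ, ∀ i, |M (i + 1) ω - M i ω| ≤ R)
    (hsep : ∀ᵐ ω ∂μ, ∀ i, δ ≤ |M (i + 1) ω - M i ω|) :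
    ∀ᵐ ω ∂μ, ¬BddAbove (range fun n => M n ω) := by
  filter_upwards [hM.submartingale.bddAbove_iff_exists_tendsto hbdd, hsep] with ω hiff hω hM
  obtain ⟨c, hc⟩ := hiff.1 hM
  have hinc : Tendsto (fun i => M (i + 1) ω - M i ω) atTop (𝓝 0) := by
    simpa using (hc.comp (tendsto_add_atTop_nat 1)).sub hc
  obtain ⟨N, hN⟩ := Metric.tendsto_atTop.1 hinc δ hδ
  have := hN N le_rfl
  rw [Real.dist_0_eq_abs] at this
  linarith [hω N]

end Martingale

section StrongLaw

variable {Ω : Type*} [MeasurableSpace Ω] {μ : Measure Ω} {X : ℕ → Ω → ℝ}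

lemma integral_indicator_Iic_comp {Z : Ω → ℝ} (hZ : Measurable Z) (x : ℝ) :
    ∫ ω, (Iic x).indicator 1 (Z ω) ∂μ = μ.real {ω | Z ω ≤ x} := by
  simp_rw [← indicator_comp_right]
  exact integral_indicator_one (hZ measurableSet_Iic)

lemma integrable_indicator_Iic_comp [IsFiniteMeasure μ] {Z : Ω → ℝ} (hZ : Measurable Z)
    (x : ℝ) :
    Integrable (fun ω => (Iic x).indicator (1 : ℝ → ℝ) (Z ω)) μ := by
  simp_rw [← indicator_comp_right]
  exact (integrable_const 1).indicator (hZ measurableSet_Iic)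

lemma ae_tendsto_edf [IsFiniteMeasure μ] (hX : Measurable (X 0))
    (hindep : Pairwise fun i j => IndepFun (X i) (X j) μ)
    (hident : ∀ i, IdentDistrib (X i) (X 0) μ μ) (x : ℝ) :
    ∀ᵐ ω ∂μ, Tendsto (fun n => edf X n ω x) atTop (𝓝 (μ.real {ω | X 0 ω ≤ x})) := by
  have hg : Measurable ((Iic x).indicator (1 : ℝ → ℝ)) :=
    measurable_const.indicator measurableSet_Iic
  have := strong_law_ae_real (fun i => (Iic x).indicator 1 ∘ X i)
    (integrable_indicator_Iic_comp hX x)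
    (fun i j hij => (hindep hij).comp hg hg) (fun i => (hident i).comp hg)
  simp only [Function.comp_apply, integral_indicator_Iic_comp hX] at this
  simpa only [edf_eq_sum_indicator] using this

end StrongLaw

section SampleQuantile

variable {Ω : Type*} [MeasurableSpace Ω] {μ : Measure Ω} [IsProbabilityMeasure μ]
  {X : ℕ → Ω → ℝ}

theorem ae_frequently_le_edf (hmeas : ∀ i, Measurable (X i)) (hindep : iIndepFun X μ)
    (hident : ∀ i, IdentDistrib (X i) (X 0) μ μ) {x : ℝ}
    (h0 : 0 < μ.real {ω | X 0 ω ≤ x}) (h1 : μ.real {ω | X 0 ω ≤ x} < 1) :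
    ∀ᵐ ω ∂μ, ∃ᶠ n in atTop, μ.real {ω | X 0 ω ≤ x} ≤ edf X n ω x := by
  set c := μ.real {ω | X 0 ω ≤ x}
  set g : ℝ → ℝ := fun t => (Iic x).indicator 1 t - c
  have hg : Measurable g := (measurable_const.indicator measurableSet_Iic).sub_const c
  have hg_abs : ∀ t, |g t| ∈ Icc (min c (1 - c)) 1 := abs_indicator_one_sub_mem_Icc _ h0 h1
  set Y : ℕ → Ω → ℝ := fun i => g ∘ X i
  have hYm : ∀ i, StronglyMeasurable (Y i) := fun i => (hg.comp (hmeas i)).stronglyMeasurable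
  have hYint : ∀ i, Integrable (Y i) μ := fun i =>
    .of_bound (hYm i).aestronglyMeasurable 1 (ae_of_all _ fun ω => (hg_abs _).2)
  have hYmean : ∀ i, μ[Y i] = 0 := fun i => by
    rw [((hident i).comp hg).integral_eq]
    change ∫ ω, (Iic x).indicator 1 (X 0 ω) - c ∂μ = 0
    rw [integral_sub (integrable_indicator_Iic_comp (hmeas 0) x) (integrable_const c)]
    simp [integral_indicator_Iic_comp (hmeas 0), c]
  have hM := (hindep.comp _ fun _ => hg).martingale_sum_range_succ hYm hYint hYmean
  have hstep : ∀ i ω,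
      (∑ j ∈ Finset.range (i + 1 + 1), Y j) ω - (∑ j ∈ Finset.range (i + 1), Y j) ω
        = g (X (i + 1) ω) := fun i ω => by
    rw [← Pi.sub_apply, Finset.sum_range_succ_sub_sum]; rfl
  filter_upwards [hM.ae_not_bddAbove_range (R := 1) (lt_min h0 (sub_pos.2 h1))
    (ae_of_all _ fun ω i => by simpa only [hstep, NNReal.coe_one] using (hg_abs _).2)
    (ae_of_all _ fun ω i => by simpa only [hstep] using (hg_abs _).1)] with ω hω
  -- the martingale at time `n` is `(n + 1) * (edf X (n + 1) ω x - c)`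
  refine (tendsto_add_atTop_nat 1).frequently
    ((frequently_le_of_not_bddAbove_range hω 0).mono fun n hn => ?_)
  rw [edf_eq_sum_indicator, le_div_iff₀ (by positivity)]
  simpa [Y, g, Finset.sum_sub_distrib, mul_comm] using hn

lemma ae_eventually_le_lq_edf (hX : Measurable (X 0))
    (hindep : Pairwise fun i j => IndepFun (X i) (X j) μ)
    (hident : ∀ i, IdentDistrib (X i) (X 0) μ μ) {p r : ℝ} (hp : p ≤ 1)
    (hr : μ.real {ω | X 0 ω ≤ r} < p) :
    ∀ᵐ ω ∂μ, ∀ᶠ n in atTop, r ≤ lq (edf X n ω) p := by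
  filter_upwards [ae_tendsto_edf hX hindep hident r] with ω hω
  filter_upwards [hω.eventually_lt_const hr, eventually_ne_atTop 0] with n hn hn0
  exact le_lq (edf_mono X n ω) (nonempty_edf_ge X hn0 hp) hn

lemma ae_frequently_lq_edf_le (hmeas : ∀ i, Measurable (X i)) (hindep : iIndepFun X μ)
    (hident : ∀ i, IdentDistrib (X i) (X 0) μ μ) {p r : ℝ} (hp : p ∈ Ioo (0 : ℝ) 1)
    (hr : p ≤ μ.real {ω | X 0 ω ≤ r}) :
    ∀ᵐ ω ∂μ, ∃ᶠ n in atTop, lq (edf X n ω) p ≤ r := by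
  suffices ∀ᵐ ω ∂μ, ∃ᶠ n in atTop, p ≤ edf X n ω r by
    filter_upwards [this] with ω hω
    exact hω.mono fun n hn => lq_le (bddBelow_edf_ge X hp.1) hn
  rcases hr.lt_or_eq with hlt | rfl
  · filter_upwards [ae_tendsto_edf (hmeas 0) (fun i j hij => hindep.indepFun hij) hident r]
      with ω hω
    exact ((hω.eventually_const_lt hlt).mono fun n hn => hn.le).frequently
  · exact ae_frequently_le_edf hmeas hindep hident hp.1 hp.2

end SampleQuantile

/-- Almost surely, the liminf of the left sample quantiles equals `lq F p`. -/
theorem liminf_left_sample_quantile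
    {Ω : Type*} [MeasurableSpace Ω] (μ : Measure Ω) [IsProbabilityMeasure μ]
    (X : ℕ → Ω → ℝ) (hmeas : ∀ i, Measurable (X i))
    (hindep : iIndepFun X μ)
    (hident : ∀ i, IdentDistrib (X i) (X 0) μ μ)
    (F : ℝ → ℝ) (hF : ∀ x, F x = (μ {ω | X 0 ω ≤ x}).toReal)
    (p : ℝ) (hp : p ∈ Set.Ioo (0 : ℝ) 1) :
    ∀ᵐ ω ∂μ, Filter.liminf (fun n => lq (edf X n ω) p) atTop = lq F p := by
  have : IsProbabilityMeasure (μ.map (X 0)) :=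
    Measure.isProbabilityMeasure_map (hmeas 0).aemeasurable
  have hFcdf : F = cdf (μ.map (X 0)) := funext fun x => by
    rw [hF, cdf_eq_real, map_measureReal_apply (hmeas 0) measurableSet_Iic]; rfl
  have hFmono : Monotone F := hFcdf ▸ monotone_cdf _
  have hbdd : BddBelow {x | p ≤ F x} := hFcdf ▸ bddBelow_cdf_ge _ hp.1
  have hne : {x | p ≤ F x}.Nonempty := hFcdf ▸ nonempty_cdf_ge _ hp.2
  have hlow : ∀ᵐ ω ∂μ, ∀ r : ℚ, (r : ℝ) < lq F p → ∀ᶠ n in atTop, (r : ℝ) ≤ lq (edf X n ω) p :=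
    ae_all_iff.2 fun r => eventually_imp_distrib_left.2 fun hr =>
      ae_eventually_le_lq_edf (hmeas 0) (fun i j hij => hindep.indepFun hij) hident hp.2.le
        ((hF r).symm.trans_lt (lt_of_lt_lq hbdd hr))
  have hhigh : ∀ᵐ ω ∂μ, ∀ r : ℚ, lq F p < r → ∃ᶠ n in atTop, lq (edf X n ω) p ≤ r :=
    ae_all_iff.2 fun r => eventually_imp_distrib_left.2 fun hr =>
      ae_frequently_lq_edf_le hmeas hindep hident hp ((le_of_lq_lt hFmono hne hr).trans_eq (hF r))
  filter_upwards [hlow, hhigh] with ω using liminf_eq_of_forall_rat
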